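/- arXiv:1910.14129 — 6 statements merged into one kernel-verified Lean document; each statement's English description precedes it below -/
import Mathlib

section
/- For any positive integer t, any integers a_1,...,a_t, and any coefficients ε_1,...,ε_t each in {-2,-1,1,2}, the absolute value of (ε_1·3^{a_1} + ε_2·3^{a_2} + ... + ε_t·3^{a_t}) - 1/2 is at least 1/(2·3^t). -/
/-!
Induct on the number `t` of terms. If every exponent is at least `-t`, then `2 · 3^t` times
the sum minus `1/2` is an even integer minus `3^t`, hence odd and at least `1` in absolute value.
Otherwise some term has absolute value at most `2 · 3^(-t-1)`; by induction the other `t - 1`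
terms sum to something at distance at least `1/(2 · 3^(t-1))` from `1/2`, and
`1/(2 · 3^(t-1)) - 2 · 3^(-t-1) ≥ 1/(2 · 3^t)`.
-/

lemma one_div_two_mul_le_abs_sub_half {m : ℕ} (hm : Odd m) {x : ℚ} {N : ℤ} (hx : x * m = N) :
    1 / (2 * m) ≤ |x - 1 / 2| := by
  have hodd : Odd (2 * N - m) := (even_two_mul N).sub_odd (by exact_mod_cast hm.natCast)
  have hne : (2 * N - m : ℤ) ≠ 0 := by rintro h; simp [h] at hodd
  have hone : (1 : ℚ) ≤ |((2 * N - m : ℤ) : ℚ)| := by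
    rw [← Int.cast_abs]; exact_mod_cast Int.one_le_abs hne
  push_cast at hone
  have hm0 : (0 : ℚ) < m := by exact_mod_cast hm.pos
  have hsub : x - 1 / 2 = (2 * N - m) / (2 * m) := by
    rw [← hx]; field_simp
  rw [hsub, abs_div, abs_of_pos (by linarith : (0 : ℚ) < 2 * m)]
  gcongr

lemma exists_intCast_eq_sum_mul_zpow_three_mul_pow {ι : Type*} (s : Finset ι) (ε a : ι → ℤ)
    {k : ℕ} (ha : ∀ i ∈ s, -(k : ℤ) ≤ a i) :
    ∃ N : ℤ, (∑ i ∈ s, (ε i : ℚ) * 3 ^ a i) * (3 ^ k : ℕ) = N := by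
  refine ⟨∑ i ∈ s, ε i * 3 ^ (a i + k).toNat, ?_⟩
  push_cast
  rw [Finset.sum_mul]
  refine Finset.sum_congr rfl fun i hi => ?_
  rw [← zpow_natCast (3 : ℚ) (a i + k).toNat, Int.toNat_of_nonneg (by linarith [ha i hi]),
    zpow_add₀ three_ne_zero, zpow_natCast, mul_assoc]

lemma abs_mul_zpow_three_le {e a : ℤ} {m : ℕ} (he : |e| ≤ 2) (ha : a ≤ -m) :
    |(e : ℚ) * 3 ^ a| ≤ 2 / 3 ^ m := by
  have h3a : (3 : ℚ) ^ a ≤ 1 / 3 ^ m := by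
    rw [one_div, ← zpow_natCast, ← zpow_neg]
    exact zpow_le_zpow_right₀ (by norm_num) ha
  rw [abs_mul, abs_of_pos (by positivity : (0 : ℚ) < 3 ^ a), ← mul_one_div]
  gcongr
  exact_mod_cast he

lemma one_div_two_mul_three_pow_card_le_abs_sum_sub_half {ι : Type*} (s : Finset ι)
    (ε a : ι → ℤ) (hε : ∀ i ∈ s, |ε i| ≤ 2) :
    1 / (2 * 3 ^ s.card) ≤ |∑ i ∈ s, (ε i : ℚ) * 3 ^ a i - 1 / 2| := by
  classical
  induction hn : s.card generalizing s with
  | zero => norm_num [Finset.card_eq_zero.mp hn]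
  | succ n ih =>
    by_cases hbig : ∀ i ∈ s, -((n + 1 : ℕ) : ℤ) ≤ a i
    · obtain ⟨N, hN⟩ := exists_intCast_eq_sum_mul_zpow_three_mul_pow s ε a hbig
      simpa using one_div_two_mul_le_abs_sub_half (Odd.pow (by decide : Odd 3)) hN
    push Not at hbig
    obtain ⟨j, hj, hja⟩ := hbig
    have hrest := ih (s.erase j) (fun i hi => hε i (Finset.mem_of_mem_erase hi))
      (by rw [Finset.card_erase_of_mem hj, hn, Nat.add_sub_cancel])
    have hterm : |(ε j : ℚ) * 3 ^ a j| ≤ 2 / 3 ^ (n + 2) :=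
      abs_mul_zpow_three_le (hε j hj) (by push_cast at hja ⊢; omega)
    set rest := ∑ i ∈ s.erase j, (ε i : ℚ) * 3 ^ a i
    set term := (ε j : ℚ) * 3 ^ a j
    rw [← Finset.add_sum_erase s _ hj]
    calc 1 / (2 * 3 ^ (n + 1)) ≤ 1 / (2 * 3 ^ n) - 2 / 3 ^ (n + 2) := by
          rw [pow_succ, pow_succ, pow_succ]
          field_simp
          norm_num
      _ ≤ |rest - 1 / 2| - |term| := by linarith
      _ ≤ |term + rest - 1 / 2| := by
          have h := abs_add_le (term + rest - 1 / 2) (-term)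
          rw [abs_neg, show term + rest - 1 / 2 + -term = rest - 1 / 2 by ring] at h
          linarith

theorem stmt_0_general (t : ℕ) (a : Fin t → ℤ) (ε : Fin t → ℤ)
    (hε : ∀ i, ε i = -2 ∨ ε i = -1 ∨ ε i = 1 ∨ ε i = 2) :
    |(∑ i, (ε i : ℚ) * (3 : ℚ) ^ (a i)) - 1/2| ≥ 1 / (2 * 3 ^ t) := by
  have hε' : ∀ i ∈ Finset.univ, |ε i| ≤ 2 := fun i _ => by
    rcases hε i with h | h | h | h <;> simp [h]
  simpa using one_div_two_mul_three_pow_card_le_abs_sum_sub_half Finset.univ ε a hε'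

theorem stmt_0 (t : ℕ) (ht : 0 < t) (a : Fin t → ℤ) (ε : Fin t → ℤ)
    (hε : ∀ i, ε i = -2 ∨ ε i = -1 ∨ ε i = 1 ∨ ε i = 2) :
    |(∑ i, (ε i : ℚ) * (3 : ℚ) ^ (a i)) - 1/2| ≥ 1 / (2 * 3 ^ t) :=
  stmt_0_general t a ε hε
end

section
/- There exists a finite connected graph that is almost bridgeless but does not admit a bipolar numbering. -/
/-!
Glue a triangle at each vertex of a triangle. The result is connected and every edge lies on a
triangle, so it has no bridges. Each glued triangle has two vertices adjacent only to each other
and to a vertex of the central triangle; in a bipolar numbering one of the two must carry the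
label `0` or the largest label, and three disjoint such pairs cannot share these two labels.
-/

/-- A graph is bridgeless if it has no bridges. -/
def Bridgeless {V : Type*} (G : SimpleGraph V) : Prop := ∀ e, ¬ G.IsBridge e

/-- A graph is almost bridgeless if one can add a single edge (possibly an already existing
one, in which case the graph itself must be bridgeless) so that the result is bridgeless. -/
def AlmostBridgeless {V : Type*} (G : SimpleGraph V) : Prop :=
  ∃ u v : V, Bridgeless (G ⊔ SimpleGraph.fromEdgeSet {s(u, v)})

/-- A bipolar numbering: a bijective labeling of the vertices with `0, …, k-1` such that
every vertex with a positive label has a neighbor with a smaller label, and every vertex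
with label other than the largest has a neighbor with a larger label. -/
def HasBipolarNumbering {V : Type*} [Fintype V] (G : SimpleGraph V) : Prop :=
  ∃ ℓ : V ≃ Fin (Fintype.card V),
    (∀ v, (ℓ v : ℕ) ≠ 0 → ∃ w, G.Adj v w ∧ ℓ w < ℓ v) ∧
    (∀ v, (ℓ v : ℕ) ≠ Fintype.card V - 1 → ∃ w, G.Adj v w ∧ ℓ v < ℓ w)

namespace SimpleGraph

variable {V : Type*} {G : SimpleGraph V}

lemma bridgeless_of_connected_of_forall_adj_exists_triangle (hG : G.Connected)
    (htri : ∀ u v, G.Adj u v → ∃ w, G.Adj v w ∧ G.Adj w u) : Bridgeless G := by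
  intro e
  induction e using Sym2.ind with
  | _ u v =>
    rw [isBridge_iff, not_not, reachable_deleteEdges_iff_exists_walk]
    by_cases huv : G.Adj u v
    · obtain ⟨w, hvw, hwu⟩ := htri u v huv
      refine ⟨.cons hwu.symm (.cons hvw.symm .nil), ?_⟩
      simp [hvw.ne, hwu.ne.symm]
    · obtain ⟨p⟩ := hG.preconnected u v
      exact ⟨p, fun h => huv (p.edges_subset_edgeSet h)⟩

lemma fromEdgeSet_singleton_diag (v : V) : fromEdgeSet {s(v, v)} = ⊥ := by
  ext a b
  simp only [fromEdgeSet_adj, Set.mem_singleton_iff, bot_adj, iff_false, not_and, Sym2.eq_iff]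
  rintro (⟨rfl, rfl⟩ | ⟨rfl, rfl⟩) <;> exact absurd rfl

end SimpleGraph

lemma Bridgeless.almostBridgeless {V : Type*} {G : SimpleGraph V} (hG : Bridgeless G) (v : V) :
    AlmostBridgeless G :=
  ⟨v, v, by rwa [SimpleGraph.fromEdgeSet_singleton_diag, sup_bot_eq]⟩

section BipolarNumbering

variable {V : Type*} [Fintype V] {G : SimpleGraph V} {ℓ : V ≃ Fin (Fintype.card V)}

lemma exists_extreme_label_of_neighbors_subset
    (hdown : ∀ v, (ℓ v : ℕ) ≠ 0 → ∃ w, G.Adj v w ∧ ℓ w < ℓ v)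
    (hup : ∀ v, (ℓ v : ℕ) ≠ Fintype.card V - 1 → ∃ w, G.Adj v w ∧ ℓ v < ℓ w)
    {a b c : V} (ha : ∀ w, G.Adj a w → w = b ∨ w = c) (hb : ∀ w, G.Adj b w → w = a ∨ w = c) :
    ∃ x ∈ ({a, b} : Set V), (ℓ x : ℕ) = 0 ∨ (ℓ x : ℕ) = Fintype.card V - 1 := by
  -- otherwise each of `a`, `b` has its two possible neighbours on opposite sides of it, which
  -- fails for whichever of `a`, `b` is farther from `c`
  by_contra! h
  obtain ⟨ha0, han⟩ := h a (by simp)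
  obtain ⟨hb0, hbn⟩ := h b (by simp)
  obtain ⟨w₁, haw₁, hw₁⟩ := hdown a ha0
  obtain ⟨w₂, haw₂, hw₂⟩ := hup a han
  obtain ⟨w₃, hbw₃, hw₃⟩ := hdown b hb0
  obtain ⟨w₄, hbw₄, hw₄⟩ := hup b hbn
  rcases ha w₁ haw₁ with rfl | rfl <;> rcases ha w₂ haw₂ with rfl | rfl <;>
    rcases hb w₃ hbw₃ with rfl | rfl <;> rcases hb w₄ hbw₄ with rfl | rfl <;>
    simp only [Fin.lt_def] at * <;> omega

lemma not_hasBipolarNumbering_of_pendant_pairs {ι : Type*} [Fintype ι]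
    (hι : 2 < Fintype.card ι) (a b c : ι → V)
    (hdisj : Pairwise fun i j => Disjoint ({a i, b i} : Set V) {a j, b j})
    (ha : ∀ i w, G.Adj (a i) w → w = b i ∨ w = c i)
    (hb : ∀ i w, G.Adj (b i) w → w = a i ∨ w = c i) : ¬ HasBipolarNumbering G := by
  rintro ⟨ℓ, hdown, hup⟩
  choose x hx hext using fun i => exists_extreme_label_of_neighbors_subset hdown hup (ha i) (hb i)
  -- an extreme label is determined by whether it is `0`, and there are only two such answers
  obtain ⟨i, j, hij, hsame⟩ := Fintype.exists_ne_map_eq_of_card_lt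
    (fun i => decide ((ℓ (x i) : ℕ) = 0)) (by simpa using hι)
  have hxij : x i = x j := ℓ.injective <| Fin.ext <| by
    rcases hext i with hi | hi <;> rcases hext j with hj | hj <;> simp_all
  exact Set.disjoint_left.mp (hdisj hij) (hx i) (hxij ▸ hx j)

end BipolarNumbering

/-- A triangle `0 1 2` with triangles `0 3 4`, `1 5 6`, `2 7 8` glued at its vertices: the
simple-graph version of the paper's example, each doubled edge to a pendant vertex being
replaced by a triangle. -/
def triangleWithEars : SimpleGraph (Fin 9) :=
  SimpleGraph.fromRel fun a b => (a, b) ∈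
    [(0, 1), (1, 2), (2, 0), (0, 3), (3, 4), (4, 0), (1, 5), (5, 6), (6, 1), (2, 7), (7, 8), (8, 2)]

instance : DecidableRel triangleWithEars.Adj :=
  fun _ _ => inferInstanceAs (Decidable (_ ∧ _))

lemma triangleWithEars_connected : triangleWithEars.Connected := by
  have hnear : ∀ v, ∃ w, triangleWithEars.Adj 0 w ∧ (w = v ∨ triangleWithEars.Adj w v) := by
    decide
  refine (SimpleGraph.connected_iff_exists_forall_reachable _).mpr ⟨0, fun v => ?_⟩
  obtain ⟨w, h0w, rfl | hwv⟩ := hnear v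
  · exact h0w.reachable
  · exact h0w.reachable.trans hwv.reachable

lemma triangleWithEars_bridgeless : Bridgeless triangleWithEars :=
  SimpleGraph.bridgeless_of_connected_of_forall_adj_exists_triangle triangleWithEars_connected
    (by decide)

lemma triangleWithEars_not_hasBipolarNumbering : ¬ HasBipolarNumbering triangleWithEars :=
  not_hasBipolarNumbering_of_pendant_pairs (ι := Fin 3) (by simp) ![3, 5, 7] ![4, 6, 8] ![0, 1, 2]
    (by intro i j hij; fin_cases i <;> fin_cases j <;> simp_all)
    (by decide) (by decide)

theorem stmt_4 :
    ∃ (n : ℕ) (G : SimpleGraph (Fin n)),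
      G.Connected ∧ AlmostBridgeless G ∧ ¬ HasBipolarNumbering G :=
  ⟨9, triangleWithEars, triangleWithEars_connected, triangleWithEars_bridgeless.almostBridgeless 0,
    triangleWithEars_not_hasBipolarNumbering⟩
end

section
/- Every almost bridgeless finite connected graph admits a contiguous oriented labeling. -/
/-- A set of edges forms a connected subgraph: any two vertices covered by the edge set
are joined by a walk using only these edges. -/
def EdgeSetConnected {V : Type*} (S : Set (Sym2 V)) : Prop :=
  ∀ u v : V, (∃ e ∈ S, u ∈ e) → (∃ e ∈ S, v ∈ e) →
    (SimpleGraph.fromEdgeSet S).Reachable u v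

/-- A contiguous oriented labeling of a graph with `m` edges: a labeling of the edges by
`0, …, m-1` (each edge used exactly once), each edge `i` oriented from its tail `iᵀ` to its
head `iᴴ` (encoded as a dart), such that for each `i > 0` the edges labeled `0, …, i-1`
form a connected subgraph containing the tail of edge `i`, and for each `i < m-1` the edges
labeled `i+1, …, m-1` form a connected subgraph containing the head of edge `i`. -/
def HasContiguousOrientedLabeling {V : Type*} (G : SimpleGraph V) (m : ℕ) : Prop :=
  ∃ d : Fin m → G.Dart,
    Function.Bijective (fun i => (⟨(d i).edge, (d i).edge_mem⟩ : G.edgeSet)) ∧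
    (∀ i : Fin m, 0 < (i : ℕ) →
      EdgeSetConnected {e | ∃ j, j < i ∧ e = (d j).edge} ∧
      ∃ j, j < i ∧ (d i).fst ∈ (d j).edge) ∧
    (∀ i : Fin m, (i : ℕ) < m - 1 →
      EdgeSetConnected {e | ∃ j, i < j ∧ e = (d j).edge} ∧
      ∃ j, i < j ∧ (d i).snd ∈ (d j).edge)

/-!
Label the edges greedily, orienting each new edge `ab` away from the set `A` of vertices already
reached (initially `A = {u}`, where `G + uv` is bridgeless), so that tails lie on earlier edges.
The unlabelled edges stay connected, and stay bridgeless once `A ∪ {v}` is contracted to a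
point: initially because `G + uv` is bridgeless, later because `a` and `b` join `A`.
Such a graph has an edge at `A` that is a non-bridge or the only edge at its end in `A`;
deleting it keeps the rest connected and containing `b`, so heads lie on later edges.
Otherwise both sides of a bridge at `A` contain a leaf side, spanned by no further bridge, which
must meet `A ∪ {v}`; a vertex of `A` there would be pendant or on a non-bridge, so both sides
contain `v`. Connectivity of prefixes and suffixes follows from where tails and heads lie.
-/

open Function

namespace SimpleGraph

variable {V : Type*} {G H : SimpleGraph V} {A B : Set V} {a b s t u v z : V}

theorem Reachable.deleteEdges_or (h : G.Reachable a z) :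
    (G.deleteEdges {s(a, b)}).Reachable a z ∨ (G.deleteEdges {s(a, b)}).Reachable b z := by
  rw [reachable_iff_reflTransGen] at h
  induction h with
  | refl => exact Or.inl .rfl
  | @tail y z _ hyz ih =>
    by_cases he : s(y, z) = s(a, b)
    · rcases Sym2.eq_iff.mp he with ⟨-, rfl⟩ | ⟨-, rfl⟩
      · exact Or.inr .rfl
      · exact Or.inl .rfl
    · have hyz' : (G.deleteEdges {s(a, b)}).Adj y z := by simpa [hyz] using he
      exact ih.imp (·.trans hyz'.reachable) (·.trans hyz'.reachable)

def edgeSide (G : SimpleGraph V) (s t : V) : Set V :=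
  {z | (G.deleteEdges {s(s, t)}).Reachable t z}

theorem IsBridge.not_mem_edgeSide (h : G.IsBridge s(s, t)) : s ∉ G.edgeSide s t :=
  fun hs => h hs.symm

/-- `G` is bridgeless once the vertex set `B` is contracted to a single vertex. -/
def BridgelessMod (G : SimpleGraph V) (B : Set V) : Prop :=
  ∀ ⦃p q⦄, G.Adj p q → (G.deleteEdges {s(p, q)} ⊔ fromEdgeSet B.sym2).Reachable p q

theorem BridgelessMod.mono (h : G.BridgelessMod A) (hAB : A ⊆ B) : G.BridgelessMod B :=
  fun _ _ hpq => (h hpq).mono <| sup_le_sup_left (fromEdgeSet_mono fun e he => by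
    induction e with | h x y => exact ⟨hAB he.1, hAB he.2⟩) _

theorem BridgelessMod.deleteEdges (h : G.BridgelessMod B) (ha : a ∈ B) (hb : b ∈ B) :
    (G.deleteEdges {s(a, b)}).BridgelessMod B := by
  refine fun p q hpq => (h ((deleteEdges_adj ..).mp hpq).1).mono fun x y hxy => ?_
  simp only [sup_adj, deleteEdges_adj, fromEdgeSet_adj, Set.mem_singleton_iff,
    Set.mk_mem_sym2_iff] at hxy ⊢
  by_cases hab : s(x, y) = s(a, b)
  · rcases Sym2.eq_iff.mp hab with ⟨rfl, rfl⟩ | ⟨rfl, rfl⟩ <;>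
      · rcases hxy with h | h <;> grind [Adj.ne]
  · tauto

/-- The cycle through `st` in the contracted graph has to leave the side of `t` through `B`. -/
theorem BridgelessMod.exists_mem_edgeSide (h : G.BridgelessMod B) (hst : G.Adj s t)
    (hbr : G.IsBridge s(s, t)) : ∃ z ∈ B, z ∈ G.edgeSide s t := by
  by_contra! hB
  have hside : ∀ z, (G.deleteEdges {s(s, t)} ⊔ fromEdgeSet B.sym2).Reachable t z →
      z ∈ G.edgeSide s t := by
    intro z hz
    rw [reachable_iff_reflTransGen] at hz
    induction hz with
    | refl => exact .rfl
    | @tail y z _ hyz ih =>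
      rcases hyz with hyz | hyz
      · exact ih.trans hyz.reachable
      · exact absurd ih (hB y ((fromEdgeSet_adj _).mp hyz).1.1)
  exact hbr.not_mem_edgeSide (hside s (h hst).symm)

/-- Take `s't'` with a minimal side: a bridge inside that side, oriented away from `t'`, would
have a strictly smaller one. -/
theorem exists_leaf_bridge [Finite V] (hst : G.Adj s t) (hbr : G.IsBridge s(s, t)) :
    ∃ s' t', G.Adj s' t' ∧ G.IsBridge s(s', t') ∧ G.edgeSide s' t' ⊆ G.edgeSide s t ∧
      ∀ p ∈ G.edgeSide s' t', ∀ q ∈ G.edgeSide s' t', G.Adj p q → ¬ G.IsBridge s(p, q) := by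
  obtain ⟨⟨s', t'⟩, ⟨hadj, hbr', hsub⟩, hmin⟩ := exists_minimalFor_of_wellFoundedLT
    (fun x : V × V => G.Adj x.1 x.2 ∧ G.IsBridge s(x.1, x.2) ∧
      G.edgeSide x.1 x.2 ⊆ G.edgeSide s t)
    (fun x => G.edgeSide x.1 x.2) ⟨(s, t), hst, hbr, subset_rfl⟩
  refine ⟨s', t', hadj, hbr', hsub, fun p hp q hq hpq hpqbr => ?_⟩
  obtain ⟨o, c, hoc, hoc', ho, hc, hct⟩ : ∃ o c, s(o, c) = s(p, q) ∧ G.Adj o c ∧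
      o ∈ G.edgeSide s' t' ∧ c ∈ G.edgeSide s' t' ∧
      ¬ (G.deleteEdges {s(p, q)}).Reachable t' c := by
    by_cases htp : (G.deleteEdges {s(p, q)}).Reachable t' p
    · exact ⟨p, q, rfl, hpq, hp, hq, fun htq => hpqbr (htp.symm.trans htq)⟩
    · exact ⟨q, p, Sym2.eq_swap, hpq.symm, hq, hp, htp⟩
  rw [← hoc] at hpqbr hct
  have hsub' : G.edgeSide o c ⊆ G.edgeSide s' t' := by
    intro z hz
    change (G.deleteEdges {s(o, c)}).Reachable c z at hz
    rw [reachable_iff_reflTransGen] at hz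
    induction hz with
    | refl => exact hc
    | @tail y z hcy hyz ih =>
      by_cases he : s(y, z) = s(s', t')
      · rcases Sym2.eq_iff.mp he with ⟨rfl, -⟩ | ⟨rfl, -⟩
        · exact absurd ih hbr'.not_mem_edgeSide
        · exact absurd ((reachable_iff_reflTransGen _ _).mpr hcy).symm hct
      · have hyz' : (G.deleteEdges {s(s', t')}).Adj y z := by
          simpa [((deleteEdges_adj ..).mp hyz).1] using he
        exact ih.trans hyz'.reachable
  have hside := hmin (j := (o, c)) ⟨hoc', hpqbr, hsub'.trans hsub⟩ hsub'
  exact hpqbr.not_mem_edgeSide (hside ho)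

theorem exists_adj_not_isBridge_of_mem_edgeSide (hst : G.Adj s t)
    (hleaf : ∀ p ∈ G.edgeSide s t, ∀ q ∈ G.edgeSide s t, G.Adj p q → ¬ G.IsBridge s(p, q))
    (hz : z ∈ G.edgeSide s t) (hdeg : ∀ w, G.Adj z w → ∃ c, G.Adj z c ∧ c ≠ w) :
    ∃ w, G.Adj z w ∧ ¬ G.IsBridge s(z, w) := by
  obtain ⟨w, hzw⟩ : ∃ w, (G.deleteEdges {s(s, t)}).Adj z w := by
    rcases eq_or_ne t z with rfl | htz
    · obtain ⟨c, htc, hcs⟩ := hdeg s hst.symm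
      have hne : s(t, c) ≠ s(s, t) := by
        rw [Ne, Sym2.eq_iff]
        rintro (⟨rfl, -⟩ | ⟨-, rfl⟩)
        exacts [hst.ne rfl, hcs rfl]
      exact ⟨c, (deleteEdges_adj ..).mpr ⟨htc, hne⟩⟩
    · exact (mem_support _).mp (mem_support_of_reachable htz.symm hz.symm)
  have hzw' := ((deleteEdges_adj ..).mp hzw).1
  exact ⟨w, hzw', hleaf z hz w (hz.trans hzw.reachable) hzw'⟩

theorem BridgelessMod.exists_anchor_edge [Finite V] (h : G.BridgelessMod (insert v A))
    (ha : a ∈ A) (hab : G.Adj a b) :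
    ∃ a ∈ A, ∃ b, G.Adj a b ∧ (¬ G.IsBridge s(a, b) ∨ ∀ c, G.Adj a c → c = b) := by
  by_contra! hA
  have hv : ∀ s t, G.Adj s t → G.IsBridge s(s, t) → v ∈ G.edgeSide s t := by
    intro s t hst hbr
    obtain ⟨s', t', hadj, hbr', hsub, hleaf⟩ := exists_leaf_bridge hst hbr
    obtain ⟨z, hzB | hzA, hz⟩ := h.exists_mem_edgeSide hadj hbr'
    · exact hzB ▸ hsub hz
    · obtain ⟨w, hzw, hnb⟩ := exists_adj_not_isBridge_of_mem_edgeSide hadj hleaf hz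
        fun w hzw => (hA z hzA w hzw).2
      exact absurd (hA z hzA w hzw).1 hnb
  have hbr := (hA a ha b hab).1
  have hbr' : G.IsBridge s(b, a) := Sym2.eq_swap ▸ hbr
  have hvb := hv a b hab hbr
  have hva := hv b a hab.symm hbr'
  rw [edgeSide, Sym2.eq_swap] at hva
  exact hbr (hva.trans hvb.symm)

/-- The invariant of the peeling process: `A` holds the vertices already reached, and the
edges of `H` are those still to be labelled. -/
structure PeelingInvariant (H : SimpleGraph V) (A : Set V) (v : V) : Prop where
  reachable : ∀ x ∈ H.support, ∀ y ∈ H.support, H.Reachable x y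
  bridgelessMod : H.BridgelessMod (insert v A)
  anchor : H ≠ ⊥ → ∃ a ∈ A, a ∈ H.support

theorem PeelingInvariant.exists_step [Finite V] (hH : H.PeelingInvariant A v) (hne : H ≠ ⊥) :
    ∃ a ∈ A, ∃ b, H.Adj a b ∧
      (H.deleteEdges {s(a, b)}).PeelingInvariant (insert a (insert b A)) v ∧
      (H.deleteEdges {s(a, b)} ≠ ⊥ → b ∈ (H.deleteEdges {s(a, b)}).support) := by
  obtain ⟨a₀, ha₀, b₀, hab₀⟩ := hH.anchor hne
  obtain ⟨a, ha, b, hab, hpeel⟩ := hH.bridgelessMod.exists_anchor_edge ha₀ hab₀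
  set H' := H.deleteEdges {s(a, b)}
  have hreach : ∀ x ∈ H'.support, H'.Reachable x b := by
    intro x hx
    have hax := hH.reachable a hab.mem_support_left x (support_mono (deleteEdges_le _) hx)
    rcases hax.deleteEdges_or (b := b) with hax | hbx
    · rcases hpeel with hnb | hpend
      · exact hax.symm.trans (not_not.mp hnb)
      · obtain ⟨c, hac⟩ : a ∈ H'.support := by
          rcases eq_or_ne a x with rfl | hax'
          exacts [hx, mem_support_of_reachable hax' hax]
        obtain ⟨hac, hac'⟩ := (deleteEdges_adj ..).mp hac
        exact absurd (by rw [hpend c hac]; rfl) hac'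
    · exact hbx.symm
  have hb : H' ≠ ⊥ → b ∈ H'.support := by
    intro hne'
    obtain ⟨x, y, hxy⟩ := ne_bot_iff_exists_adj.mp hne'
    rcases eq_or_ne b x with rfl | hbx
    exacts [hxy.mem_support_left, mem_support_of_reachable hbx (hreach x hxy.mem_support_left).symm]
  refine ⟨a, ha, b, hab, ⟨fun x hx y hy => (hreach x hx).trans (hreach y hy).symm, ?_,
    fun hne' => ⟨b, by simp, hb hne'⟩⟩, hb⟩
  exact (hH.bridgelessMod.mono (by grind)).deleteEdges (by simp) (by simp)

theorem Connected.peelingInvariant (hG : G.Connected)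
    (hbl : Bridgeless (G ⊔ fromEdgeSet {s(u, v)})) : G.PeelingInvariant {u} v where
  reachable x _ y _ := hG.preconnected x y
  bridgelessMod p q hpq := by
    refine (not_not.mp (hbl s(p, q))).mono fun x y hxy => ?_
    simp only [deleteEdges_adj, sup_adj, fromEdgeSet_adj, Set.mem_singleton_iff,
      Set.mk_mem_sym2_iff, Set.mem_insert_iff] at hxy ⊢
    grind [Sym2.eq_iff]
  anchor hne := by
    obtain ⟨x, y, hxy⟩ := ne_bot_iff_exists_adj.mp hne
    rcases eq_or_ne u x with rfl | hux
    exacts [⟨u, rfl, hxy.mem_support_left⟩, ⟨u, rfl, mem_support_of_reachable hux (hG u x)⟩]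

theorem Dart.fst_mem_edge (d : G.Dart) : d.fst ∈ d.edge := Sym2.mem_mk_left _ _

theorem Dart.snd_mem_edge (d : G.Dart) : d.snd ∈ d.edge := Sym2.mem_mk_right _ _

theorem Dart.reachable_fst_of_mem_edge {S : Set (Sym2 V)} {x : V} (d : G.Dart) (hd : d.edge ∈ S)
    (hx : x ∈ d.edge) : (fromEdgeSet S).Reachable x d.fst := by
  rcases Sym2.mem_iff.mp hx with rfl | rfl
  · rfl
  · exact Adj.reachable ((fromEdgeSet_adj _).mpr ⟨Sym2.eq_swap ▸ hd, d.snd_ne_fst⟩)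

theorem edgeSetConnected_of_fst_mem {ι : Type*} [PartialOrder ι] [OrderBot ι] [WellFoundedLT ι]
    (d : ι → G.Dart) (h : ∀ i ≠ ⊥, ∃ j < i, (d i).fst ∈ (d j).edge) (i : ι) :
    EdgeSetConnected {e | ∃ j, j < i ∧ e = (d j).edge} := by
  have hroot : ∀ j < i, ∀ x ∈ (d j).edge,
      (fromEdgeSet {e | ∃ j, j < i ∧ e = (d j).edge}).Reachable x (d ⊥).fst := by
    intro j
    induction j using WellFoundedLT.induction with | _ j ih
    intro hji x hx
    refine ((d j).reachable_fst_of_mem_edge (S := {e | ∃ j, j < i ∧ e = (d j).edge})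
      ⟨j, hji, rfl⟩ hx).trans ?_
    rcases eq_or_ne j ⊥ with rfl | hj
    · rfl
    · obtain ⟨k, hkj, hk⟩ := h j hj
      exact ih k hkj (hkj.trans hji) _ hk
  rintro x y ⟨_, ⟨j, hj, rfl⟩, hx⟩ ⟨_, ⟨k, hk, rfl⟩, hy⟩
  exact (hroot j hj x hx).trans (hroot k hk y hy).symm

/-- The local conditions of a contiguous oriented labeling, tails being allowed in `A` as well;
its connectivity conditions follow from them by `edgeSetConnected_of_fst_mem`. -/
structure IsContiguousFrom {m : ℕ} (A : Set V) (d : Fin m → G.Dart) : Prop where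
  fst_mem : ∀ i, (d i).fst ∈ A ∨ ∃ j < i, (d i).fst ∈ (d j).edge
  snd_mem : ∀ i j, i < j → ∃ k, i < k ∧ (d i).snd ∈ (d k).edge

theorem IsContiguousFrom.cons {m : ℕ} {d₀ : G.Dart} {d : Fin m → G.Dart} (h₀ : d₀.fst ∈ A)
    (hsnd : 0 < m → ∃ k, d₀.snd ∈ (d k).edge)
    (hd : IsContiguousFrom (insert d₀.fst (insert d₀.snd A)) d) :
    IsContiguousFrom A (Fin.cons d₀ d : Fin (m + 1) → G.Dart) where
  fst_mem i := by
    cases i using Fin.cases with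
    | zero => exact Or.inl h₀
    | succ i =>
      simp only [Fin.cons_succ]
      rcases hd.fst_mem i with (h | h | h) | ⟨j, hji, hj⟩
      · exact Or.inr ⟨0, i.succ_pos, h ▸ d₀.fst_mem_edge⟩
      · exact Or.inr ⟨0, i.succ_pos, h ▸ d₀.snd_mem_edge⟩
      · exact Or.inl h
      · exact Or.inr ⟨j.succ, Fin.succ_lt_succ_iff.mpr hji, by simpa using hj⟩
  snd_mem i j hij := by
    cases j using Fin.cases with
    | zero => exact absurd hij (Fin.not_lt_zero _)
    | succ j =>
      cases i using Fin.cases with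
      | zero =>
        obtain ⟨k, hk⟩ := hsnd j.pos
        exact ⟨k.succ, k.succ_pos, by simpa using hk⟩
      | succ i =>
        obtain ⟨k, hik, hk⟩ := hd.snd_mem i j (Fin.succ_lt_succ_iff.mp hij)
        exact ⟨k.succ, Fin.succ_lt_succ_iff.mpr hik, by simpa using hk⟩

theorem PeelingInvariant.exists_isContiguousFrom [Finite V] (hHG : H ≤ G)
    (hH : H.PeelingInvariant A v) :
    ∃ m, ∃ d : Fin m → G.Dart, Injective (Dart.edge ∘ d) ∧
      Set.range (Dart.edge ∘ d) = H.edgeSet ∧ IsContiguousFrom A d := by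
  induction hn : H.edgeSet.ncard using Nat.strong_induction_on generalizing H A with
  | _ n ih =>
    by_cases hne : H = ⊥
    · subst hne
      exact ⟨0, Fin.elim0, injective_of_subsingleton _, by simp,
        ⟨fun i => i.elim0, fun i => i.elim0⟩⟩
    obtain ⟨a, ha, b, hab, hH', hb⟩ := hH.exists_step hne
    have hlt : (H.deleteEdges {s(a, b)}).edgeSet.ncard < n := by
      rw [← hn, edgeSet_deleteEdges]
      exact Set.ncard_sdiff_singleton_lt_of_mem hab (Set.toFinite _)
    obtain ⟨m, d, hinj, hrange, hd⟩ := ih _ hlt ((deleteEdges_le _).trans hHG) hH' rfl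
    refine ⟨m + 1, Fin.cons ⟨(a, b), hHG hab⟩ d, ?_, ?_, hd.cons ha fun hm => ?_⟩
    · rw [Fin.comp_cons, Fin.cons_injective_iff, hrange, edgeSet_deleteEdges]
      exact ⟨fun h => h.2 rfl, hinj⟩
    · rw [Fin.comp_cons, Fin.range_cons, hrange, edgeSet_deleteEdges, Dart.edge_mk,
        Set.insert_sdiff_singleton, Set.insert_eq_of_mem (by exact hab)]
    · obtain ⟨c, hbc⟩ := hb <| edgeSet_nonempty.mp <| hrange ▸ ⟨_, Set.mem_range_self ⟨0, hm⟩⟩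
      obtain ⟨k, hk⟩ : s(b, c) ∈ Set.range (Dart.edge ∘ d) := hrange ▸ hbc
      exact ⟨k, by simp only [comp_apply] at hk; simp [hk]⟩

theorem IsContiguousFrom.hasContiguousOrientedLabeling {m : ℕ} {d : Fin m → G.Dart}
    (hbij : Bijective (fun i => (⟨(d i).edge, (d i).edge_mem⟩ : G.edgeSet)))
    (hd : IsContiguousFrom {u} d) : HasContiguousOrientedLabeling G m := by
  rcases m with _ | n
  · exact ⟨d, hbij, fun i => i.elim0, fun i => i.elim0⟩
  have htail : ∀ i ≠ ⊥, ∃ j < i, (d i).fst ∈ (d j).edge := by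
    intro i hi
    rcases hd.fst_mem i with hu | h
    · refine ⟨⊥, bot_lt_iff_ne_bot.mpr hi, ?_⟩
      rcases hd.fst_mem ⊥ with h0 | ⟨j, hj, -⟩
      · exact (hu.trans h0.symm) ▸ (d ⊥).fst_mem_edge
      · exact absurd hj not_lt_bot
    · exact h
  have hhead : ∀ i ≠ ⊤, ∃ j > i, (d i).snd ∈ (d j).edge :=
    fun i hi => hd.snd_mem i ⊤ (lt_top_iff_ne_top.mpr hi)
  refine ⟨d, hbij, fun i hi => ⟨edgeSetConnected_of_fst_mem d htail i, htail i ?_⟩,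
    fun i hi => ⟨?_, hhead i ?_⟩⟩
  · exact fun h => by simp [h] at hi
  · -- a suffix is a prefix of the reversed sequence of reversed darts
    have := edgeSetConnected_of_fst_mem (fun j : (Fin (n + 1))ᵒᵈ => (d (OrderDual.ofDual j)).symm)
      (fun j hj => by
        obtain ⟨k, hjk, hk⟩ := hhead (OrderDual.ofDual j) hj
        exact ⟨OrderDual.toDual k, hjk, by simpa using hk⟩) (OrderDual.toDual i)
    simpa using this
  · exact fun h => by simp [h] at hi

end SimpleGraph

theorem stmt_6 {V : Type*} [Fintype V] (G : SimpleGraph V) (hconn : G.Connected)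
    (hab : AlmostBridgeless G) :
    ∃ m : ℕ, HasContiguousOrientedLabeling G m := by
  obtain ⟨u, v, hbl⟩ := hab
  obtain ⟨m, d, hinj, hrange, hd⟩ :=
    (hconn.peelingInvariant hbl).exists_isContiguousFrom le_rfl
  refine ⟨m, hd.hasContiguousOrientedLabeling ⟨fun i j hij => hinj congr(($hij).1), ?_⟩⟩
  rintro ⟨e, he⟩
  obtain ⟨i, rfl⟩ := hrange.ge he
  exact ⟨i, rfl⟩
end

section
/- Consider a star graph with 2n-1 edges where each of n agents values each edge exactly 1/(2n-1), uniformly distributed within each edge. Then in any allocation of the star into n pairwise disjoint connected pieces, some agent receives value at most 1/(2n-1). -/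
/-!
If every agent got more than `1 / (2n - 1)`, each piece would have positive length on at least
two edges. A connected piece touching two edges contains the center, so on every edge where it
has positive length it contains a whole interval ending at the center. Two such intervals on
the same edge overlap in infinitely many points, so the sets of edges used by different agents
are disjoint, and `n` disjoint sets of at least two edges need `2n > 2n - 1` edges.
-/

open MeasureTheory

/-- A piece of cake on a star with `k` edges: for each edge (parametrized by `[0,1]` with the
center of the star at `1` and the outer endpoint at `0`), the subset of that edge in the piece.
Every part must be a subset of the edge `[0,1]`. -/
def IsPieceOnStar (k : ℕ) (P : Fin k → Set ℝ) : Prop :=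
  ∀ j, P j ⊆ Set.Icc (0 : ℝ) 1

/-- A piece on the star is connected iff each part is an interval and, whenever the piece
touches two distinct edges, each nonempty part contains the center (the point `1`). -/
def IsConnectedPieceOnStar (k : ℕ) (P : Fin k → Set ℝ) : Prop :=
  (∀ j, (P j).OrdConnected) ∧
  ∀ j j' : Fin k, j ≠ j' → (P j).Nonempty → (P j').Nonempty → (1 : ℝ) ∈ P j

/-- The value of a piece when each edge is valued `w`, uniformly distributed on the edge. -/
noncomputable def starPieceValue (k : ℕ) (P : Fin k → Set ℝ) (w : ℝ) : ℝ :=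
  ∑ j, w * (volume (P j)).toReal

open Filter Topology Finset Function

lemma Finset.card_mul_le_card_of_pairwise_disjoint {ι α : Type*} [Fintype ι] [Fintype α]
    [DecidableEq α] {E : ι → Finset α} {m : ℕ} (hE : Pairwise (Disjoint on E))
    (hm : ∀ i, m ≤ #(E i)) : Fintype.card ι * m ≤ Fintype.card α :=
  calc Fintype.card ι * m = ∑ _i : ι, m := by simp
    _ ≤ ∑ i, #(E i) := sum_le_sum fun i _ => hm i
    _ = #(univ.biUnion E) := (card_biUnion fun i _ i' _ h => hE h).symm
    _ ≤ Fintype.card α := card_le_univ _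

lemma Set.infinite_of_mem_nhdsLE {α : Type*} [TopologicalSpace α] [LinearOrder α]
    [OrderTopology α] [NoMinOrder α] [DenselyOrdered α] {a : α} {s : Set α}
    (hs : s ∈ 𝓝[≤] a) : s.Infinite := by
  obtain ⟨l, hl, hsub⟩ := mem_nhdsLE_iff_exists_Icc_subset.mp hs
  exact (Set.Icc_infinite hl).mono hsub

section Star

variable {k : ℕ} {P : Fin k → Set ℝ}

noncomputable def positiveEdges (P : Fin k → Set ℝ) : Finset (Fin k) :=
  open Classical in univ.filter fun j => volume (P j) ≠ 0

lemma mem_positiveEdges {j : Fin k} : j ∈ positiveEdges P ↔ volume (P j) ≠ 0 := by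
  classical
  simp [positiveEdges]

lemma IsPieceOnStar.volume_le_one (hP : IsPieceOnStar k P) (j : Fin k) : volume (P j) ≤ 1 := by
  simpa using measure_mono (μ := volume) (hP j)

lemma IsPieceOnStar.sum_toReal_volume_le_card (hP : IsPieceOnStar k P) :
    ∑ j, (volume (P j)).toReal ≤ #(positiveEdges P) :=
  calc ∑ j, (volume (P j)).toReal = ∑ j ∈ positiveEdges P, (volume (P j)).toReal :=
        (sum_subset (subset_univ _) fun j _ hj => by
          rw [mem_positiveEdges, not_not] at hj; simp [hj]).symm
    _ ≤ ∑ _j ∈ positiveEdges P, (1 : ℝ) := sum_le_sum fun j _ =>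
        ENNReal.toReal_le_of_le_ofReal zero_le_one (by simpa using hP.volume_le_one j)
    _ = #(positiveEdges P) := by simp

lemma IsPieceOnStar.one_lt_card_positiveEdges (hP : IsPieceOnStar k P) {w : ℝ} (hw : 0 < w)
    (hval : w < starPieceValue k P w) : 1 < #(positiveEdges P) := by
  rw [starPieceValue, ← mul_sum] at hval
  have hlen : 1 < ∑ j, (volume (P j)).toReal := by
    by_contra! h
    nlinarith
  exact_mod_cast hlen.trans_le hP.sum_toReal_volume_le_card

lemma IsPieceOnStar.exists_lt_one_mem (hP : IsPieceOnStar k P) {j : Fin k}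
    (hj : j ∈ positiveEdges P) : ∃ x ∈ P j, x < 1 := by
  by_contra! h
  have hsub : P j ⊆ {1} := fun x hx => le_antisymm (hP j hx).2 (h x hx)
  exact mem_positiveEdges.mp hj (measure_mono_null hsub (measure_singleton 1))

/-- Membership in `𝓝[≤] 1` means that the part contains an interval ending at the center. -/
lemma IsConnectedPieceOnStar.mem_nhdsLE_one (hP : IsPieceOnStar k P)
    (hc : IsConnectedPieceOnStar k P) (htwo : 1 < #(positiveEdges P)) {j : Fin k}
    (hj : j ∈ positiveEdges P) : P j ∈ 𝓝[≤] 1 := by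
  obtain ⟨x, hxP, hx⟩ := hP.exists_lt_one_mem hj
  obtain ⟨j', hj', hne⟩ := exists_mem_ne htwo j
  have hcenter : (1 : ℝ) ∈ P j :=
    hc.2 j j' hne.symm ⟨x, hxP⟩ (nonempty_of_measure_ne_zero (mem_positiveEdges.mp hj'))
  exact mem_of_superset (Icc_mem_nhdsLE hx) ((hc.1 j).out hxP hcenter)

lemma disjoint_positiveEdges {Q : Fin k → Set ℝ} (hP : IsPieceOnStar k P)
    (hQ : IsPieceOnStar k Q) (hcP : IsConnectedPieceOnStar k P)
    (hcQ : IsConnectedPieceOnStar k Q) (htwoP : 1 < #(positiveEdges P))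
    (htwoQ : 1 < #(positiveEdges Q)) (hfin : ∀ j, (P j ∩ Q j).Finite) :
    Disjoint (positiveEdges P) (positiveEdges Q) :=
  disjoint_left.mpr fun j hjP hjQ => Set.infinite_of_mem_nhdsLE
    (inter_mem (hcP.mem_nhdsLE_one hP htwoP hjP) (hcQ.mem_nhdsLE_one hQ htwoQ hjQ)) (hfin j)

end Star

theorem stmt_12 (n : ℕ) (hn : 1 ≤ n) (P : Fin n → Fin (2 * n - 1) → Set ℝ)
    (hpiece : ∀ i, IsPieceOnStar (2 * n - 1) (P i))
    (hconn : ∀ i, IsConnectedPieceOnStar (2 * n - 1) (P i))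
    (hdisj : ∀ i i', i ≠ i' → ∀ j, (P i j ∩ P i' j).Finite) :
    ∃ i, starPieceValue (2 * n - 1) (P i) (1 / (2 * (n : ℝ) - 1)) ≤ 1 / (2 * (n : ℝ) - 1) := by
  by_contra! hval
  have hw : (0 : ℝ) < 1 / (2 * (n : ℝ) - 1) := by
    have : (1 : ℝ) ≤ n := by exact_mod_cast hn
    exact one_div_pos.mpr (by linarith)
  have htwo i : 1 < #(positiveEdges (P i)) :=
    (hpiece i).one_lt_card_positiveEdges hw (hval i)
  have hcount := Finset.card_mul_le_card_of_pairwise_disjoint (m := 2)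
    (E := fun i => positiveEdges (P i)) (fun i i' hne => disjoint_positiveEdges (hpiece i)
      (hpiece i') (hconn i) (hconn i') (htwo i) (htwo i') (hdisj i i' hne)) htwo
  simp only [Fintype.card_fin] at hcount
  omega
end

section
/- Consider a star graph with four edges where both of two agents value each edge exactly 1/4, uniformly. Then there is no pair of disjoint connected pieces (A_1, A_2) such that one agent's value for A_1 exceeds 1/2 and the other agent's value for A_2 exceeds 1/4. -/
open MeasureTheory

/-!
Every edge has length one, so a piece worth more than `c` when each edge is worth `w` has
positive length on more than `c / w` edges. A piece worth more than `1/2` therefore meets at least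
three of the four edges and one worth more than `1/4` at least two, so by pigeonhole some edge
carries positive length of both. Each piece also meets another edge, so by connectedness both
contain the center of that edge, and being intervals of positive length they share a whole
segment `[x, 1]` ending at the center, which is not a finite overlap.
-/

lemma Finset.lt_card_filter_pos_of_lt_sum {ι : Type*} (s : Finset ι) {v : ι → ℝ}
    (hv : ∀ i ∈ s, v i ≤ 1) {c : ℝ} (hc : c < ∑ i ∈ s, v i) :
    c < (s.filter fun i => 0 < v i).card := by
  refine hc.trans_le ?_
  rw [Finset.card_filter, Nat.cast_sum]
  refine Finset.sum_le_sum fun i hi => ?_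
  split_ifs with hpos
  · simpa using hv i hi
  · simpa using not_lt.mp hpos

lemma volume_toReal_le_one_of_subset_Icc {s : Set ℝ} (hs : s ⊆ Set.Icc 0 1) :
    (volume s).toReal ≤ 1 :=
  ENNReal.toReal_le_of_le_ofReal zero_le_one <| by
    simpa [Real.volume_Icc] using measure_mono (μ := volume) hs

lemma exists_mem_lt_of_measure_ne_zero {α : Type*} [MeasurableSpace α] [PartialOrder α]
    {μ : Measure α} [NullSingletonClass μ] {s : Set α} {a : α} (hs : s ⊆ Set.Iic a)
    (hμ : μ s ≠ 0) :
    ∃ x ∈ s, x < a := by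
  by_contra! h
  have hsub : s ⊆ {a} := fun x hx => (hs hx).lt_or_eq.resolve_left (h x hx)
  exact hμ (measure_mono_null hsub (measure_singleton a))

noncomputable def starPieceSupport {k : ℕ} (P : Fin k → Set ℝ) : Finset (Fin k) :=
  Finset.univ.filter fun j => 0 < (volume (P j)).toReal

lemma lt_card_starPieceSupport {k : ℕ} {P : Fin k → Set ℝ} (hP : IsPieceOnStar k P)
    {c w : ℝ} (hw : 0 < w) (hc : c < starPieceValue k P w) :
    c / w < (starPieceSupport P).card := by
  refine Finset.univ.lt_card_filter_pos_of_lt_sum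
    (fun j _ => volume_toReal_le_one_of_subset_Icc (hP j)) ?_
  rw [div_lt_iff₀' hw, Finset.mul_sum]
  exact hc

lemma IsConnectedPieceOnStar.exists_Icc_subset {k : ℕ} {P : Fin k → Set ℝ}
    (hP : IsPieceOnStar k P) (hconn : IsConnectedPieceOnStar k P) {j j' : Fin k} (hne : j ≠ j')
    (hj : j ∈ starPieceSupport P) (hj' : j' ∈ starPieceSupport P) :
    ∃ x < 1, Set.Icc x 1 ⊆ P j := by
  simp only [starPieceSupport, Finset.mem_filter, Finset.mem_univ, true_and,
    ENNReal.toReal_pos_iff] at hj hj'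
  have hcenter : (1 : ℝ) ∈ P j := hconn.2 j j' hne
    (nonempty_of_measure_ne_zero hj.1.ne') (nonempty_of_measure_ne_zero hj'.1.ne')
  obtain ⟨x, hx, hx1⟩ := exists_mem_lt_of_measure_ne_zero (fun y hy => (hP j hy).2) hj.1.ne'
  exact ⟨x, hx1, (hconn.1 j).out hx hcenter⟩

theorem stmt_13 :
    ¬ ∃ A₁ A₂ : Fin 4 → Set ℝ,
      IsPieceOnStar 4 A₁ ∧ IsPieceOnStar 4 A₂ ∧
      IsConnectedPieceOnStar 4 A₁ ∧ IsConnectedPieceOnStar 4 A₂ ∧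
      (∀ j, (A₁ j ∩ A₂ j).Finite) ∧
      1 / 2 < starPieceValue 4 A₁ (1 / 4) ∧ 1 / 4 < starPieceValue 4 A₂ (1 / 4) := by
  rintro ⟨A₁, A₂, hP₁, hP₂, hconn₁, hconn₂, hfin, hval₁, hval₂⟩
  have hcard₁ : 2 < (starPieceSupport A₁).card := by
    have := lt_card_starPieceSupport hP₁ (by norm_num) hval₁
    norm_num at this
    exact_mod_cast this
  have hcard₂ : 1 < (starPieceSupport A₂).card := by
    have := lt_card_starPieceSupport hP₂ (by norm_num) hval₂
    norm_num at this
    exact_mod_cast this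
  obtain ⟨j, hj⟩ : (starPieceSupport A₁ ∩ starPieceSupport A₂).Nonempty :=
    Finset.inter_nonempty_of_card_lt_card_add_card (Finset.subset_univ _) (Finset.subset_univ _)
      (by simp only [Finset.card_univ, Fintype.card_fin]; omega)
  rw [Finset.mem_inter] at hj
  obtain ⟨j₁, hj₁, hne₁⟩ := Finset.exists_mem_ne (s := starPieceSupport A₁) (by omega) j
  obtain ⟨j₂, hj₂, hne₂⟩ := Finset.exists_mem_ne hcard₂ j
  obtain ⟨x₁, hx₁, hI₁⟩ := hconn₁.exists_Icc_subset hP₁ hne₁.symm hj.1 hj₁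
  obtain ⟨x₂, hx₂, hI₂⟩ := hconn₂.exists_Icc_subset hP₂ hne₂.symm hj.2 hj₂
  have hcommon : Set.Icc (max x₁ x₂) 1 ⊆ A₁ j ∩ A₂ j := fun y ⟨hxy, hy1⟩ =>
    ⟨hI₁ ⟨le_of_max_le_left hxy, hy1⟩, hI₂ ⟨le_of_max_le_right hxy, hy1⟩⟩
  exact Set.Icc_infinite (max_lt hx₁ hx₂) ((hfin j).subset hcommon)
end

section
/- Let α ∈ (1/2, 1]. On the interval cake [0,1], suppose agent 1 values [0,1] uniformly and agent 2's value is uniformly concentrated on [1-α, α]. Then any pair of disjoint subintervals (A_1, A_2) with agent 1's value for A_1 at least α forces agent 2's value for A_2 to be 0. -/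
/-!
An interval `A₁ ⊆ [0, 1]` of length at least `α` cannot miss a point `x ∈ (1 - α, α)`: it would
lie entirely on one side of `x`, inside `[0, x]` or `[x, 1]`, both shorter than `α`. So `A₁`
contains `(1 - α, α)`, and `A₂`, meeting `A₁` in at most one point, is Lebesgue-null on
`[1 - α, α]`.
-/

open MeasureTheory Set

theorem Set.OrdConnected.subset_Iic_or_subset_Ici_of_notMem {β : Type*} [LinearOrder β]
    {A : Set β} (hA : A.OrdConnected) {x : β} (hx : x ∉ A) : A ⊆ Iic x ∨ A ⊆ Ici x := by
  by_contra! h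
  obtain ⟨y, hyA, hxy⟩ : ∃ y ∈ A, y < x := by simpa [subset_def] using h.2
  obtain ⟨z, hzA, hxz⟩ : ∃ z ∈ A, x < z := by simpa [subset_def] using h.1
  exact hx (hA.out hyA hzA ⟨hxy.le, hxz.le⟩)

theorem Set.OrdConnected.Ioo_subset_of_le_volume_real {A : Set ℝ} (hA : A.OrdConnected)
    {c d ℓ : ℝ} (hAcd : A ⊆ Icc c d) (hℓ : 0 < ℓ) (hvol : ℓ ≤ volume.real A) :
    Ioo (d - ℓ) (c + ℓ) ⊆ A := by
  intro x ⟨hdx, hxc⟩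
  by_contra hx
  rcases hA.subset_Iic_or_subset_Ici_of_notMem hx with hAx | hAx
  · have hle : volume.real A ≤ max (x - c) 0 := by
      rw [← Real.volume_real_Icc]
      exact measureReal_mono (fun y hy => ⟨(hAcd hy).1, hAx hy⟩) measure_Icc_lt_top.ne
    rcases le_max_iff.1 (hvol.trans hle) with h | h <;> linarith
  · have hle : volume.real A ≤ max (d - x) 0 := by
      rw [← Real.volume_real_Icc]
      exact measureReal_mono (fun y hy => ⟨hAx hy, (hAcd hy).2⟩) measure_Icc_lt_top.ne
    rcases le_max_iff.1 (hvol.trans hle) with h | h <;> linarith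

theorem measure_inter_Icc_eq_zero_of_Ioo_subset {β : Type*} [PartialOrder β] [MeasurableSpace β]
    {μ : Measure β} [NullSingletonClass μ] {A B : Set β} (hAB : (A ∩ B).Subsingleton) {s t : β}
    (hst : Ioo s t ⊆ A) : μ (B ∩ Icc s t) = 0 := by
  rw [← measure_congr ((ae_eq_refl B).inter Ioo_ae_eq_Icc)]
  have hsub : B ∩ Ioo s t ⊆ A ∩ B := fun x hx => ⟨hst hx.2, hx.1⟩
  exact measure_mono_null hsub (hAB.measure_zero μ)

theorem stmt_14_general (α : ℝ) (hα1 : 1 / 2 < α) (A₁ A₂ : Set ℝ)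
    (hA₁ : A₁ ⊆ Set.Icc (0 : ℝ) 1)
    (hA₁c : A₁.OrdConnected)
    (hdisj : (A₁ ∩ A₂).Subsingleton)
    (hval₁ : α ≤ (volume A₁).toReal) :
    (volume (A₂ ∩ Set.Icc (1 - α) α)).toReal / (2 * α - 1) = 0 := by
  have hIoo : Ioo (1 - α) α ⊆ A₁ := by
    simpa using hA₁c.Ioo_subset_of_le_volume_real hA₁ (by linarith) hval₁
  simp [measure_inter_Icc_eq_zero_of_Ioo_subset hdisj hIoo]

theorem stmt_14 (α : ℝ) (hα1 : 1 / 2 < α) (hα2 : α ≤ 1) (A₁ A₂ : Set ℝ)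
    (hA₁ : A₁ ⊆ Set.Icc (0 : ℝ) 1) (hA₂ : A₂ ⊆ Set.Icc (0 : ℝ) 1)
    (hA₁c : A₁.OrdConnected) (hA₂c : A₂.OrdConnected)
    (hdisj : (A₁ ∩ A₂).Subsingleton)
    (hval₁ : α ≤ (volume A₁).toReal) :
    (volume (A₂ ∩ Set.Icc (1 - α) α)).toReal / (2 * α - 1) = 0 :=
  stmt_14_general α hα1 A₁ A₂ hA₁ hA₁c hdisj hval₁
end
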